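/- Let ω∞(ξ,η) = ξ·|ξ| − η²/ξ (for ξ ≠ 0), and for N > 0, δ > 0 define E_high = {(ξ,η) : N − δ/4 < |ξ| < N + δ/4 and |η| < N^{1/2}|ξ|} and E_low = {(ξ,η) : 3δ/4 < |ξ| < 5δ/4 and |η| < N^{1/2}|ξ|}. Then there exists a constant C > 0 such that for all N ≥ 2, all 0 < δ ≤ 1, all (ξ₁,η₁) ∈ E_high and all (ξ₂,η₂) ∈ E_low, one has | ω∞(ξ₁,η₁) + ω∞(ξ₂,η₂) + ω∞(−ξ₁−ξ₂, −η₁−η₂) | ≤ C·N·δ. -/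

import Mathlib

/-- Dispersion relation of the infinite-depth Camassa–Choi equation. -/
noncomputable def omegaInf (ξ η : ℝ) : ℝ := ξ * |ξ| - η ^ 2 / ξ

/-- High-frequency set used in the ill-posedness argument. -/
noncomputable def Ehigh (N δ : ℝ) : Set (ℝ × ℝ) :=
  {p | N - δ / 4 < |p.1| ∧ |p.1| < N + δ / 4 ∧ |p.2| < N ^ ((1 : ℝ) / 2) * |p.1|}

/-- Low-frequency set used in the ill-posedness argument. -/
noncomputable def Elow (N δ : ℝ) : Set (ℝ × ℝ) :=
  {p | 3 * δ / 4 < |p.1| ∧ |p.1| < 5 * δ / 4 ∧ |p.2| < N ^ ((1 : ℝ) / 2) * |p.1|}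

lemma abs_mul_self_sub_le (x y : ℝ) : abs (x * |x| - y * |y|) ≤ |x - y| * (|x| + |y|) := by
  have h : x * |x| - y * |y| = (x - y) * |x| + y * (|x| - |y|) := by ring
  calc abs (x * |x| - y * |y|) = abs ((x - y) * |x| + y * (|x| - |y|)) := by rw [h]
    _ ≤ abs ((x - y) * |x|) + abs (y * (|x| - |y|)) := abs_add_le _ _
    _ = |x - y| * |x| + |y| * abs (|x| - |y|) := by rw [abs_mul, abs_mul, abs_abs]
    _ ≤ |x - y| * |x| + |y| * |x - y| :=
        add_le_add_right (mul_le_mul_of_nonneg_left (abs_abs_sub_abs_le_abs_sub x y)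
          (abs_nonneg y)) _
    _ = |x - y| * (|x| + |y|) := by ring

set_option maxHeartbeats 1600000 in
theorem resonance_small_on_high_low :
    ∃ C : ℝ, 0 < C ∧ ∀ N δ : ℝ, 2 ≤ N → 0 < δ → δ ≤ 1 →
      ∀ ξ₁ η₁ ξ₂ η₂ : ℝ, (ξ₁, η₁) ∈ Ehigh N δ → (ξ₂, η₂) ∈ Elow N δ →
        |omegaInf ξ₁ η₁ + omegaInf ξ₂ η₂ + omegaInf (-ξ₁ - ξ₂) (-η₁ - η₂)| ≤
          C * N * δ := by
  refine ⟨100, by norm_num, ?_⟩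
  intro N δ hN hδ hδ1 a c b d hhigh hlow
  obtain ⟨hA1, hA2, hC⟩ := hhigh
  obtain ⟨hB1, hB2, hD⟩ := hlow
  simp only at hA1 hA2 hC hB1 hB2 hD
  have hN0 : (0 : ℝ) ≤ N := by linarith
  obtain ⟨s, hs0, hs2, hC, hD⟩ :
      ∃ s : ℝ, 0 ≤ s ∧ s ^ 2 = N ∧ |c| < s * |a| ∧ |d| < s * |b| := by
    refine ⟨N ^ ((1 : ℝ) / 2), Real.rpow_nonneg hN0 _, ?_, hC, hD⟩
    rw [← Real.rpow_natCast (N ^ ((1 : ℝ) / 2)) 2, ← Real.rpow_mul hN0]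
    norm_num
  -- basic positivity facts
  have ha0 : 0 < |a| := by linarith
  have hb0 : 0 < |b| := by linarith
  have ha : a ≠ 0 := fun h => by simp [h] at ha0
  have hb : b ≠ 0 := fun h => by simp [h] at hb0
  have habl : N / 4 ≤ |a + b| := by
    have h1 : |a| ≤ |a + b| + |b| := by
      have := abs_add_le (a + b) (-b)
      simpa using this
    linarith
  have hab0 : 0 < |a + b| := by linarith
  have hab : a + b ≠ 0 := fun h => by simp [h] at hab0
  have habu : |a + b| ≤ |a| + |b| := abs_add_le a b
  -- size bounds
  have hau : |a| ≤ 9 * N / 8 := by linarith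
  have hbu : |b| ≤ 5 * δ / 4 := le_of_lt hB2
  have hbu' : |b| ≤ 5 * N / 8 := by nlinarith
  -- squared frequency bounds
  have hc2 : c ^ 2 ≤ N * a ^ 2 := by
    have h1 : |c| ^ 2 ≤ (s * |a|) ^ 2 := by
      have := hC.le
      nlinarith [abs_nonneg c]
    have h2 : (s * |a|) ^ 2 = N * a ^ 2 := by
      rw [mul_pow, hs2, sq_abs]
    rw [← sq_abs c]; linarith [h2 ▸ h1]
  have hd2 : d ^ 2 ≤ N * b ^ 2 := by
    have h1 : |d| ^ 2 ≤ (s * |b|) ^ 2 := by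
      have := hD.le
      nlinarith [abs_nonneg d]
    have h2 : (s * |b|) ^ 2 = N * b ^ 2 := by
      rw [mul_pow, hs2, sq_abs]
    rw [← sq_abs d]; linarith [h2 ▸ h1]
  have hcd : |c| * |d| ≤ N * (|a| * |b|) := by
    have h1 : |c| * |d| ≤ (s * |a|) * (s * |b|) := by
      have := hC.le; have := hD.le
      nlinarith [abs_nonneg c, abs_nonneg d, mul_nonneg hs0 (abs_nonneg a)]
    have h2 : (s * |a|) * (s * |b|) = N * (|a| * |b|) := by
      rw [← hs2]; ring
    linarith [h2 ▸ h1]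
  -- decomposition of the resonance function
  have key : omegaInf a c + omegaInf b d + omegaInf (-a - b) (-c - d)
      = (a * |a| - (a + b) * |a + b|) + b * |b| + (-(d ^ 2 / b))
        + (-(c ^ 2 * b / (a * (a + b)))) + (2 * c * d + d ^ 2) / (a + b) := by
    unfold omegaInf
    have h1 : -a - b = -(a + b) := by ring
    have h2 : -c - d = -(c + d) := by ring
    rw [h1, h2, abs_neg, div_neg, neg_sq]
    field_simp
    ring
  rw [key]
  have hNδ : 0 < N * δ := by positivity
  -- bound each of the five pieces
  have hab2 : |a| * |b| ≤ (9 * N / 8) * (5 * δ / 4) :=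
    mul_le_mul hau hbu (abs_nonneg b) (by linarith)
  have hNNδ : (0:ℝ) ≤ N * N * δ * |a| := by positivity
  have T1 : abs (a * |a| - (a + b) * |a + b|) ≤ 4 * (N * δ) := by
    have h := abs_mul_self_sub_le a (a + b)
    have h2 : |a - (a + b)| = |b| := by rw [show a - (a + b) = -b by ring, abs_neg]
    rw [h2] at h
    have hsum : |a| + |a + b| ≤ 3 * N := by linarith
    have h3 : |b| * (|a| + |a + b|) ≤ (5 * δ / 4) * (3 * N) :=
      mul_le_mul hbu hsum (by positivity) (by linarith)
    linarith [mul_nonneg hN0 hδ.le]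
  have T2 : abs (b * |b|) ≤ N * δ := by
    rw [abs_mul, abs_abs]
    have h3 : |b| * |b| ≤ (5 * δ / 4) * (5 * δ / 4) :=
      mul_le_mul hbu hbu (abs_nonneg b) (by linarith)
    have h4 : δ * δ ≤ 1 * δ := mul_le_mul_of_nonneg_right hδ1 hδ.le
    have h5 : 2 * δ ≤ N * δ := mul_le_mul_of_nonneg_right hN hδ.le
    linarith
  have T3 : abs (-(d ^ 2 / b)) ≤ 2 * (N * δ) := by
    rw [abs_neg, abs_div, abs_pow, sq_abs]
    rw [div_le_iff₀ hb0]
    have hb2 : N * b ^ 2 = N * |b| * |b| := by rw [← sq_abs]; ring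
    have h3 : N * |b| * |b| ≤ N * (5 * δ / 4) * |b| :=
      mul_le_mul_of_nonneg_right (mul_le_mul_of_nonneg_left hbu hN0) (abs_nonneg b)
    linarith [mul_nonneg (mul_nonneg hN0 hδ.le) (abs_nonneg b)]
  have T4 : abs (-(c ^ 2 * b / (a * (a + b)))) ≤ 6 * (N * δ) := by
    rw [abs_neg, abs_div, abs_mul, abs_mul, abs_pow, sq_abs]
    rw [div_le_iff₀ (by positivity)]
    have ha2 : c ^ 2 ≤ N * (|a| * |a|) := by
      have h0 : N * a ^ 2 = N * (|a| * |a|) := by rw [← sq_abs]; ring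
      linarith [h0 ▸ hc2]
    have h1 : c ^ 2 * |b| ≤ N * (|a| * |a|) * |b| :=
      mul_le_mul_of_nonneg_right ha2 (abs_nonneg b)
    have h2 : N * (|a| * |a|) * |b| = N * |a| * (|a| * |b|) := by ring
    have h3 : N * |a| * (|a| * |b|) ≤ N * |a| * ((9 * N / 8) * (5 * δ / 4)) :=
      mul_le_mul_of_nonneg_left hab2 (by positivity)
    have h4 : 6 * (N * δ) * (|a| * (N / 4)) ≤ 6 * (N * δ) * (|a| * |a + b|) :=
      mul_le_mul_of_nonneg_left (mul_le_mul_of_nonneg_left habl (abs_nonneg a))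
        (by positivity)
    linarith [hNNδ]
  have T5 : abs ((2 * c * d + d ^ 2) / (a + b)) ≤ 16 * (N * δ) := by
    rw [abs_div, div_le_iff₀ hab0]
    have hnum : |2 * c * d + d ^ 2| ≤ 2 * (|c| * |d|) + d ^ 2 := by
      calc |2 * c * d + d ^ 2| ≤ abs (2 * c * d) + abs (d ^ 2) := abs_add_le _ _
        _ = 2 * (|c| * |d|) + d ^ 2 := by
            rw [abs_mul, abs_mul, abs_pow, sq_abs, abs_two]; ring
    have hb2 : N * b ^ 2 ≤ N * ((5 * δ / 4) * (5 * δ / 4)) := by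
      have h0 : b ^ 2 = |b| * |b| := by rw [← sq_abs]; ring
      have h1 : |b| * |b| ≤ (5 * δ / 4) * (5 * δ / 4) :=
        mul_le_mul hbu hbu (abs_nonneg b) (by linarith)
      rw [h0]
      exact mul_le_mul_of_nonneg_left h1 hN0
    have hcd2 : N * (|a| * |b|) ≤ N * ((9 * N / 8) * (5 * δ / 4)) :=
      mul_le_mul_of_nonneg_left hab2 hN0
    have hnum2 : 2 * (|c| * |d|) + d ^ 2 ≤ 4 * (N * N * δ) := by
      have h4 : N * δ * δ ≤ N * δ * 1 :=
        mul_le_mul_of_nonneg_left hδ1 (mul_nonneg hN0 hδ.le)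
      have h5 : 2 * (N * δ) ≤ N * (N * δ) :=
        mul_le_mul_of_nonneg_right hN (mul_nonneg hN0 hδ.le)
      linarith
    have hrhs : 4 * (N * N * δ) ≤ 16 * (N * δ) * |a + b| := by
      have h6 := mul_le_mul_of_nonneg_left habl
        (by positivity : (0:ℝ) ≤ 16 * (N * δ))
      linarith
    linarith
  have tri : abs ((a * |a| - (a + b) * |a + b|) + b * |b| + (-(d ^ 2 / b))
        + (-(c ^ 2 * b / (a * (a + b)))) + (2 * c * d + d ^ 2) / (a + b))
      ≤ abs (a * |a| - (a + b) * |a + b|) + abs (b * |b|) + abs (-(d ^ 2 / b))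
        + abs (-(c ^ 2 * b / (a * (a + b)))) + abs ((2 * c * d + d ^ 2) / (a + b)) := by
    calc abs ((a * |a| - (a + b) * |a + b|) + b * |b| + (-(d ^ 2 / b))
          + (-(c ^ 2 * b / (a * (a + b)))) + (2 * c * d + d ^ 2) / (a + b))
        ≤ abs ((a * |a| - (a + b) * |a + b|) + b * |b| + (-(d ^ 2 / b)))
          + abs (-(c ^ 2 * b / (a * (a + b)))) + abs ((2 * c * d + d ^ 2) / (a + b)) :=
          abs_add_three _ _ _
      _ ≤ (abs (a * |a| - (a + b) * |a + b|) + abs (b * |b|) + abs (-(d ^ 2 / b)))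
          + abs (-(c ^ 2 * b / (a * (a + b)))) + abs ((2 * c * d + d ^ 2) / (a + b)) :=
          add_le_add_left (add_le_add_left (abs_add_three _ _ _) _) _
  have hfin : 100 * N * δ = 100 * (N * δ) := by ring
  linarith [tri]
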